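/- arXiv:2402.03727 — 4 statements merged into one kernel-verified Lean document; each statement's English description precedes it below -/
import Mathlib

section
/- Let Φ(ξ,η) = √(|ξ|²+1) − √(2|ξ−η|²+4) + √(|η|²+1). There exists a constant C > 0 such that for all ξ, η ∈ ℝ² with |ξ| ≤ 1 and |η| ≤ 1 one has |Φ(ξ,η) − ⟨ξ,η⟩| ≤ C·(|ξ|⁴ + |η|⁴). (This is the quadratic expansion (2.2) of the degenerate phase function around the origin: its value, η-gradient and η-Hessian all vanish at (0,0), and the first nontrivial term is the bilinear term ⟨ξ,η⟩.) -/
open RealInnerProductSpace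

noncomputable def Phi (ξ η : EuclideanSpace ℝ (Fin 2)) : ℝ :=
  Real.sqrt (‖ξ‖ ^ 2 + 1) - Real.sqrt (2 * ‖ξ - η‖ ^ 2 + 4) + Real.sqrt (‖η‖ ^ 2 + 1)

lemma sqrt_taylor_est (x : ℝ) (hx : 0 ≤ x) :
    |Real.sqrt (1 + x) - (1 + x / 2)| ≤ x ^ 2 / 8 := by
  set s := Real.sqrt (1 + x) with hsdef
  have hs0 : 0 ≤ s := Real.sqrt_nonneg _
  have hs2 : s ^ 2 = 1 + x := Real.sq_sqrt (by linarith)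
  have hub : s ≤ 1 + x / 2 := by nlinarith [sq_nonneg (s - (1 + x / 2))]
  have hs1 : 1 ≤ s := by nlinarith
  have hprod : 0 ≤ (1 + x / 2 - s) * ((1 + x / 2 + s) - 2) :=
    mul_nonneg (by linarith) (by linarith)
  have hlb : 1 + x / 2 - s ≤ x ^ 2 / 8 := by nlinarith [hprod, hs2]
  rw [abs_le]
  constructor <;> nlinarith

set_option maxHeartbeats 1000000 in
theorem phase_quadratic_expansion :
    ∃ C : ℝ, 0 < C ∧ ∀ ξ η : EuclideanSpace ℝ (Fin 2), ‖ξ‖ ≤ 1 → ‖η‖ ≤ 1 →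
      |Phi ξ η - ⟪ξ, η⟫| ≤ C * (‖ξ‖ ^ 4 + ‖η‖ ^ 4) := by
  refine ⟨1, one_pos, fun ξ η hξ hη => ?_⟩
  set a := ‖ξ‖ ^ 2 with ha
  set c := ‖η‖ ^ 2 with hc
  set b := ‖ξ - η‖ ^ 2 with hb
  have ha0 : 0 ≤ a := sq_nonneg _
  have hc0 : 0 ≤ c := sq_nonneg _
  have hb0 : 0 ≤ b := sq_nonneg _
  have hbac : b = a - 2 * ⟪ξ, η⟫ + c := by
    rw [hb, ha, hc]; exact norm_sub_sq_real ξ η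
  have hbound : b ≤ 2 * (a + c) := by
    have := abs_real_inner_le_norm ξ η
    have h2 : |⟪ξ, η⟫| ≤ (a + c) / 2 := by
      nlinarith [sq_nonneg (‖ξ‖ - ‖η‖), norm_nonneg ξ, norm_nonneg η]
    have := abs_le.1 h2
    linarith [this.1]
  -- rewrite the middle square root
  have hmid : Real.sqrt (2 * b + 4) = 2 * Real.sqrt (1 + b / 2) := by
    have h4 : (2 * b + 4 : ℝ) = 4 * (1 + b / 2) := by ring
    rw [h4, show (4 : ℝ) = 2 ^ 2 by norm_num, Real.sqrt_mul (by positivity),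
      Real.sqrt_sq (by norm_num)]
  have e1 := sqrt_taylor_est a ha0
  have e3 := sqrt_taylor_est c hc0
  have e2 := sqrt_taylor_est (b / 2) (by linarith)
  have hPhi : Phi ξ η = Real.sqrt (1 + a) - 2 * Real.sqrt (1 + b / 2) + Real.sqrt (1 + c) := by
    rw [Phi, ← ha, ← hc, ← hb, hmid]; ring_nf
  rw [hPhi]
  have key : Real.sqrt (1 + a) - 2 * Real.sqrt (1 + b / 2) + Real.sqrt (1 + c) - ⟪ξ, η⟫
      = (Real.sqrt (1 + a) - (1 + a / 2)) - 2 * (Real.sqrt (1 + b / 2) - (1 + b / 2 / 2))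
        + (Real.sqrt (1 + c) - (1 + c / 2)) := by
    rw [hbac]; ring
  rw [key]
  have ha4 : ‖ξ‖ ^ 4 = a ^ 2 := by rw [ha]; ring
  have hc4 : ‖η‖ ^ 4 = c ^ 2 := by rw [hc]; ring
  rw [ha4, hc4]
  have habs := abs_le.1 e1
  have hbabs := abs_le.1 e2
  have hcabs := abs_le.1 e3
  have hbsq : b ^ 2 ≤ 8 * (a ^ 2 + c ^ 2) := by nlinarith [sq_nonneg (a - c)]
  rw [abs_le]
  constructor <;> nlinarith
end

section
/- Let Φ(ξ,η) = √(|ξ|²+1) − √(2|ξ−η|²+4) + √(|η|²+1). Its gradient in η is ∇_ηΦ(ξ,η) = 2(ξ−η)/√(2|ξ−η|²+4) + η/√(|η|²+1), and there exists a constant C > 0 such that for all ξ, η ∈ ℝ² with |ξ| ≤ 1 and |η| ≤ 1 one has |∇_ηΦ(ξ,η) − ξ| ≤ C·(|ξ|³ + |η|³). -/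
noncomputable def gradPhi (ξ η : EuclideanSpace ℝ (Fin 2)) : EuclideanSpace ℝ (Fin 2) :=
  (2 / Real.sqrt (2 * ‖ξ - η‖ ^ 2 + 4)) • (ξ - η) + (1 / Real.sqrt (‖η‖ ^ 2 + 1)) • η

/-!
Each square root in `Phi ξ` has the form `√(c ‖η - a‖² + d)`, whose gradient is
`c (η - a) / √(c ‖η - a‖² + d)`. For the expansion write
`gradPhi ξ η - ξ = (1 - c₁) (η - ξ) - (1 - c₂) η` with `c₁ = 2 / √(2 ‖ξ - η‖² + 4)` and
`c₂ = 1 / √(‖η‖² + 1)`. An elementary bound gives `|1 - a / √x| ≤ (x - a²) / (2a²)`, so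
`|1 - c₁| ≤ ‖ξ - η‖² / 4` and `|1 - c₂| ≤ ‖η‖² / 2`: the error is cubic, and
`‖ξ - η‖³ ≤ 4 (‖ξ‖³ + ‖η‖³)`.
-/

section Gradient

variable {𝕜 F : Type*} [RCLike 𝕜] [NormedAddCommGroup F] [InnerProductSpace 𝕜 F] [CompleteSpace F]
  {f g : F → 𝕜} {f' g' x : F}

theorem HasGradientAt.add (hf : HasGradientAt f f' x) (hg : HasGradientAt g g' x) :
    HasGradientAt (fun y => f y + g y) (f' + g') x := by
  rw [hasGradientAt_iff_hasFDerivAt] at *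
  rw [map_add]
  exact hf.add hg

theorem HasGradientAt.const_sub (c : 𝕜) (hf : HasGradientAt f f' x) :
    HasGradientAt (fun y => c - f y) (-f') x := by
  rw [hasGradientAt_iff_hasFDerivAt] at *
  rw [map_neg]
  exact hf.const_sub c

end Gradient

theorem hasGradientAt_sqrt_mul_norm_sub_sq_add {E : Type*} [NormedAddCommGroup E]
    [InnerProductSpace ℝ E] [CompleteSpace E] {a x : E} {c d : ℝ}
    (h : c * ‖x - a‖ ^ 2 + d ≠ 0) :
    HasGradientAt (fun y => √(c * ‖y - a‖ ^ 2 + d))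
      ((c / √(c * ‖x - a‖ ^ 2 + d)) • (x - a)) x := by
  have hf := ((((hasFDerivAt_id x).sub_const a).norm_sq.const_mul c).add_const d).sqrt h
  rw [hasGradientAt_iff_hasFDerivAt]
  refine hf.congr_fderiv ?_
  ext v
  simp only [id_eq, one_div, map_sub, ContinuousLinearMap.comp_id, smul_apply, sub_apply,
    coe_innerSL_apply, nsmul_eq_mul, Nat.cast_ofNat, smul_eq_mul, map_smul,
    InnerProductSpace.toDual_apply_apply]
  field_simp

theorem hasGradientAt_Phi (ξ η : EuclideanSpace ℝ (Fin 2)) :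
    HasGradientAt (Phi ξ) (gradPhi ξ η) η := by
  have h₁ := hasGradientAt_sqrt_mul_norm_sub_sq_add (a := ξ) (c := 2) (d := 4) (x := η)
    (by positivity)
  have h₂ := hasGradientAt_sqrt_mul_norm_sub_sq_add (a := 0) (c := 1) (d := 1) (x := η)
    (by positivity)
  simp only [sub_zero, one_mul] at h₂
  convert (h₁.const_sub √(‖ξ‖ ^ 2 + 1)).add h₂ using 1
  · ext η'
    rw [Phi, norm_sub_rev]
  · rw [gradPhi, norm_sub_rev]
    module

theorem abs_one_sub_div_sqrt_le {a x : ℝ} (ha : 0 < a) (hx : a ^ 2 ≤ x) :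
    |1 - a / √x| ≤ (x - a ^ 2) / (2 * a ^ 2) := by
  have hsq : √x ^ 2 = x := Real.sq_sqrt ((sq_nonneg a).trans hx)
  have hs : a ≤ √x := Real.le_sqrt_of_sq_le hx
  set s := √x
  have hs₀ : 0 < s := ha.trans_le hs
  rw [abs_of_nonneg (by rw [sub_nonneg, div_le_one hs₀]; exact hs), one_sub_div hs₀.ne',
    div_le_div_iff₀ hs₀ (by positivity), ← hsq]
  -- `(s² - a²) s - 2a² (s - a) = (s - a)² (s + 2a)`
  nlinarith [mul_nonneg (sq_nonneg (s - a)) (by linarith : 0 ≤ s + 2 * a)]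

theorem norm_gradPhi_sub_le (ξ η : EuclideanSpace ℝ (Fin 2)) :
    ‖gradPhi ξ η - ξ‖ ≤ ‖ξ - η‖ ^ 3 / 4 + ‖η‖ ^ 3 / 2 := by
  set c₁ := 2 / √(2 * ‖ξ - η‖ ^ 2 + 4)
  set c₂ := 1 / √(‖η‖ ^ 2 + 1)
  have hc₁ : |1 - c₁| ≤ ‖ξ - η‖ ^ 2 / 4 := by
    have hx : (2 : ℝ) ^ 2 ≤ 2 * ‖ξ - η‖ ^ 2 + 4 := by linarith [sq_nonneg ‖ξ - η‖]
    convert abs_one_sub_div_sqrt_le two_pos hx using 1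
    ring
  have hc₂ : |1 - c₂| ≤ ‖η‖ ^ 2 / 2 := by
    have hx : (1 : ℝ) ^ 2 ≤ ‖η‖ ^ 2 + 1 := by linarith [sq_nonneg ‖η‖]
    convert abs_one_sub_div_sqrt_le one_pos hx using 1
    ring
  have hdecomp : gradPhi ξ η - ξ = (1 - c₁) • (η - ξ) + (1 - c₂) • (-η) := by
    rw [gradPhi]; module
  calc ‖gradPhi ξ η - ξ‖ ≤ |1 - c₁| * ‖ξ - η‖ + |1 - c₂| * ‖η‖ := by
        rw [hdecomp, ← norm_neg η, norm_sub_rev ξ η, ← Real.norm_eq_abs, ← Real.norm_eq_abs,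
          ← norm_smul, ← norm_smul]
        exact norm_add_le _ _
    _ ≤ ‖ξ - η‖ ^ 2 / 4 * ‖ξ - η‖ + ‖η‖ ^ 2 / 2 * ‖η‖ := by gcongr
    _ = ‖ξ - η‖ ^ 3 / 4 + ‖η‖ ^ 3 / 2 := by ring

theorem gradient_formula_and_expansion :
    (∀ ξ η : EuclideanSpace ℝ (Fin 2), HasGradientAt (fun η' => Phi ξ η') (gradPhi ξ η) η) ∧
    ∃ C : ℝ, 0 < C ∧ ∀ ξ η : EuclideanSpace ℝ (Fin 2), ‖ξ‖ ≤ 1 → ‖η‖ ≤ 1 →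
      ‖gradPhi ξ η - ξ‖ ≤ C * (‖ξ‖ ^ 3 + ‖η‖ ^ 3) := by
  refine ⟨hasGradientAt_Phi, 3 / 2, by norm_num, fun ξ η _ _ => ?_⟩
  have hcube : ‖ξ - η‖ ^ 3 ≤ 2 ^ 2 * (‖ξ‖ ^ 3 + ‖η‖ ^ 3) :=
    (pow_le_pow_left₀ (norm_nonneg _) (norm_sub_le ξ η) 3).trans
      (add_pow_le (norm_nonneg ξ) (norm_nonneg η) 3)
  linarith [norm_gradPhi_sub_le ξ η, pow_nonneg (norm_nonneg ξ) 3]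
end

section
/- Let Φ(ξ,η) = √(|ξ|²+1) − √(2|ξ−η|²+4) + √(|η|²+1). There exists L₀ ≥ 1000 such that for every real l ≥ L₀ and every ξ ∈ ℝ² with 2^{−3l−1} ≤ |ξ| ≤ 2^{−3l+1}, there exists a unique η ∈ ℝ² with ∇_ηΦ(ξ,η) = 0; moreover this critical point satisfies 2^{−l} ≤ |η| ≤ 2^{−l+2}, η is a positive multiple of ξ, and Φ(ξ,η) ≠ 0. (This is Corollary 2.3: for |ξ| ∼ 2^{−3l} the phase has a unique stationary point in η, located at |η| ∼ 2^{−l}, and the phase does not vanish there.) -/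
local notation "E" => EuclideanSpace ℝ (Fin 2)

lemma mul_sqrt_eq_mul_sqrt_iff {a b x y : ℝ} (hx : 0 < x) (hy : 0 < y) :
    a * √x = b * √y ↔ 0 ≤ a * b ∧ a ^ 2 * x = b ^ 2 * y := by
  have hx' := Real.sqrt_pos.2 hx
  have hy' := Real.sqrt_pos.2 hy
  have hx2 := Real.sq_sqrt hx.le
  have hy2 := Real.sq_sqrt hy.le
  constructor
  · intro h
    refine ⟨?_, by rw [← hx2, ← hy2]; linear_combination (a * √x + b * √y) * h⟩
    have : 0 ≤ a * b * (√x * √y) := by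
      calc (0 : ℝ) ≤ (b * √y) ^ 2 := sq_nonneg _
        _ = a * b * (√x * √y) := by linear_combination (-(b * √y)) * h
    exact nonneg_of_mul_nonneg_left this (by positivity)
  · rintro ⟨hab, h⟩
    have hsq : (a * √x) ^ 2 = (b * √y) ^ 2 := by rw [mul_pow, mul_pow, hx2, hy2, h]
    rcases sq_eq_sq_iff_eq_or_eq_neg.1 hsq with h' | h'
    · exact h'
    · nlinarith [mul_nonneg hab (mul_pos hx' hy').le, sq_nonneg (b * √y)]

lemma two_mul_sqrt_eq_iff (u s : ℝ) :
    2 * u * √(s ^ 2 + 1) = s * √(2 * u ^ 2 + 4) ↔ u * √(s ^ 2 + 2) = s * √2 := by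
  rw [mul_sqrt_eq_mul_sqrt_iff (by positivity) (by positivity),
    mul_sqrt_eq_mul_sqrt_iff (by positivity) (by positivity)]
  constructor <;> rintro ⟨hsign, heq⟩ <;> constructor <;> nlinarith

lemma four_add_four_mul_sub_sq_le {x : ℝ} (hx : 0 ≤ x) :
    4 + 4 * x - x ^ 2 ≤ 2 * (x + 2) * √(x + 1) := by
  have hP := Real.sqrt_nonneg (x + 1)
  have hP2 := Real.sq_sqrt (by linarith : (0 : ℝ) ≤ x + 1)
  nlinarith [sq_nonneg (4 + 4 * x - x ^ 2 - 2 * (x + 2) * √(x + 1)), mul_nonneg hx hx,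
    mul_nonneg hP hx]

/-- The map `F` with `‖ξ‖ = F ‖η‖` at a stationary point `η` of `Phi ξ`. -/
noncomputable def critNormMap (s : ℝ) : ℝ := s - s * √2 / √(s ^ 2 + 2)

lemma critNormMap_eq_iff {s r : ℝ} : critNormMap s = r ↔ (s - r) * √(s ^ 2 + 2) = s * √2 := by
  have hR : 0 < √(s ^ 2 + 2) := Real.sqrt_pos.2 (by positivity)
  rw [critNormMap, sub_eq_iff_eq_add, ← sub_eq_iff_eq_add', eq_div_iff hR.ne']

lemma sqrt_two_div_le_one (s : ℝ) : √2 / √(s ^ 2 + 2) ≤ 1 :=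
  div_le_one_of_le₀ (Real.sqrt_le_sqrt (le_add_of_nonneg_left (sq_nonneg s))) (Real.sqrt_nonneg _)

lemma sqrt_two_div_lt_one {s : ℝ} (hs : s ≠ 0) : √2 / √(s ^ 2 + 2) < 1 :=
  (div_lt_one (Real.sqrt_pos.2 (by positivity))).2
    (Real.sqrt_lt_sqrt zero_le_two (lt_add_of_pos_left 2 (by positivity)))

lemma critNormMap_eq_mul (s : ℝ) : critNormMap s = s * (1 - √2 / √(s ^ 2 + 2)) := by
  rw [critNormMap]; ring

lemma pos_of_critNormMap_pos {s : ℝ} (h : 0 < critNormMap s) : 0 < s := by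
  rw [critNormMap_eq_mul] at h
  exact pos_of_mul_pos_left h (sub_nonneg.2 (sqrt_two_div_le_one s))

lemma strictMonoOn_critNormMap : StrictMonoOn critNormMap (Set.Ici 0) := by
  intro a (ha : 0 ≤ a) b _ hab
  have hk : 1 - √2 / √(a ^ 2 + 2) ≤ 1 - √2 / √(b ^ 2 + 2) := by gcongr
  have hkb : 0 < 1 - √2 / √(b ^ 2 + 2) := sub_pos.2 (sqrt_two_div_lt_one (ha.trans_lt hab).ne')
  rw [critNormMap_eq_mul, critNormMap_eq_mul]
  calc a * (1 - √2 / √(a ^ 2 + 2)) ≤ a * (1 - √2 / √(b ^ 2 + 2)) :=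
        mul_le_mul_of_nonneg_left hk ha
    _ < b * (1 - √2 / √(b ^ 2 + 2)) := mul_lt_mul_of_pos_right hab hkb

lemma continuous_critNormMap : Continuous critNormMap := by
  unfold critNormMap
  fun_prop (disch := exact fun s => (Real.sqrt_pos.2 (by positivity)).ne')

lemma sub_sqrt_two_le_critNormMap (s : ℝ) : s - √2 ≤ critNormMap s := by
  have h : s / √(s ^ 2 + 2) ≤ 1 :=
    div_le_one_of_le₀ ((le_abs_self s).trans (Real.abs_le_sqrt (by linarith))) (Real.sqrt_nonneg _)
  rw [critNormMap, mul_comm s, mul_div_assoc]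
  exact sub_le_sub_left (mul_le_of_le_one_right (Real.sqrt_nonneg 2) h) s

lemma exists_critNormMap_eq {r : ℝ} (hr : 0 ≤ r) : ∃ s, 0 ≤ s ∧ critNormMap s = r := by
  have hr' : r ≤ critNormMap (r + √2) := by
    simpa using sub_sqrt_two_le_critNormMap (r + √2)
  have h0 : critNormMap 0 = 0 := by simp [critNormMap]
  obtain ⟨s, hs, hsr⟩ := intermediate_value_Icc (by positivity : (0 : ℝ) ≤ r + √2)
    continuous_critNormMap.continuousOn ⟨h0.symm ▸ hr, hr'⟩
  exact ⟨s, hs.1, hsr⟩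

lemma critNormMap_mul (s : ℝ) :
    critNormMap s * (√(s ^ 2 + 2) * (√(s ^ 2 + 2) + √2)) = s ^ 3 := by
  have hR : 0 < √(s ^ 2 + 2) := Real.sqrt_pos.2 (by positivity)
  have hR2 : √(s ^ 2 + 2) ^ 2 = s ^ 2 + 2 := Real.sq_sqrt (by positivity)
  have h2 : √2 ^ 2 = 2 := Real.sq_sqrt (by norm_num)
  rw [critNormMap]
  field_simp
  linear_combination s * hR2 - s * h2

lemma critNormMap_le {s : ℝ} (hs : 0 ≤ s) : critNormMap s ≤ s ^ 3 / 4 := by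
  have hF : 0 ≤ critNormMap s := by
    rw [critNormMap_eq_mul]; exact mul_nonneg hs (sub_nonneg.2 (sqrt_two_div_le_one s))
  have hR : √2 ≤ √(s ^ 2 + 2) := Real.sqrt_le_sqrt (le_add_of_nonneg_left (sq_nonneg s))
  have h2 : √2 * √2 = 2 := Real.mul_self_sqrt (by norm_num)
  nlinarith [critNormMap_mul s,
    mul_le_mul hR (add_le_add_right hR √2) (by positivity) (by positivity)]

lemma le_critNormMap {s : ℝ} (hs : 0 ≤ s) (hs2 : s ^ 2 ≤ 2) : s ^ 3 / 8 ≤ critNormMap s := by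
  have hF : 0 ≤ critNormMap s := by
    rw [critNormMap_eq_mul]; exact mul_nonneg hs (sub_nonneg.2 (sqrt_two_div_le_one s))
  have hR : √(s ^ 2 + 2) ≤ 2 := by
    rw [Real.sqrt_le_left zero_le_two]; linarith
  have h2 : √2 ≤ 2 := by rw [Real.sqrt_le_left zero_le_two]; norm_num
  nlinarith [critNormMap_mul s, mul_le_mul hR (add_le_add hR h2) (by positivity) zero_le_two]

lemma le_and_le_of_critNormMap_bounds {s t : ℝ} (hs : 0 ≤ s) (ht : 0 < t) (ht4 : t ≤ 1 / 4)
    (hlow : t ^ 3 / 2 ≤ critNormMap s) (hup : critNormMap s ≤ 2 * t ^ 3) : t ≤ s ∧ s ≤ 4 * t := by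
  have hmono := strictMonoOn_critNormMap
  constructor
  · refine (hmono.le_iff_le ht.le hs).1 ?_
    linarith [critNormMap_le ht.le, pow_pos ht 3]
  · refine (hmono.le_iff_le hs (by positivity : (0 : ℝ) ≤ 4 * t)).1 ?_
    linarith [le_critNormMap (by positivity : (0 : ℝ) ≤ 4 * t) (by nlinarith), pow_pos ht 3]

lemma exists_eq_smul_of_gradPhi_eq_zero {ξ η : E} (hξ : ξ ≠ 0) (h : gradPhi ξ η = 0) :
    ∃ c : ℝ, η = c • ξ := by
  set a := 2 / √(2 * ‖ξ - η‖ ^ 2 + 4)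
  set b := 1 / √(‖η‖ ^ 2 + 1)
  have ha : 0 < a := div_pos two_pos (Real.sqrt_pos.2 (by positivity))
  have hab : a • ξ = (a - b) • η := by
    rw [gradPhi] at h
    rw [sub_smul]
    linear_combination (norm := module) h
  have hab0 : a - b ≠ 0 := by
    rintro h0
    rw [h0, zero_smul, smul_eq_zero] at hab
    exact hab.elim ha.ne' hξ
  exact ⟨(a - b)⁻¹ * a, by rw [mul_smul, hab, inv_smul_smul₀ hab0]⟩

lemma norm_sub_smul_self_sq (ξ : E) (c : ℝ) : ‖ξ - c • ξ‖ ^ 2 = (c * ‖ξ‖ - ‖ξ‖) ^ 2 := by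
  rw [show ξ - c • ξ = (1 - c) • ξ by module, norm_smul, Real.norm_eq_abs, mul_pow, sq_abs]
  ring

lemma gradPhi_smul_self (ξ : E) (c : ℝ) :
    gradPhi ξ (c • ξ) = (2 * (1 - c) / √(2 * (c * ‖ξ‖ - ‖ξ‖) ^ 2 + 4)
      + c / √((c * ‖ξ‖) ^ 2 + 1)) • ξ := by
  rw [gradPhi, norm_sub_smul_self_sq, norm_smul, Real.norm_eq_abs, mul_pow, sq_abs, ← mul_pow]
  module

lemma gradPhi_smul_self_eq_zero_iff {ξ : E} (hξ : ξ ≠ 0) (c : ℝ) :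
    gradPhi ξ (c • ξ) = 0 ↔ critNormMap (c * ‖ξ‖) = ‖ξ‖ := by
  have hr : 0 < ‖ξ‖ := norm_pos_iff.2 hξ
  have hP : 0 < √((c * ‖ξ‖) ^ 2 + 1) := Real.sqrt_pos.2 (by positivity)
  have hQ : 0 < √(2 * (c * ‖ξ‖ - ‖ξ‖) ^ 2 + 4) := Real.sqrt_pos.2 (by positivity)
  rw [gradPhi_smul_self, smul_eq_zero, or_iff_left hξ, critNormMap_eq_iff,
    ← two_mul_sqrt_eq_iff, div_add_div _ _ hQ.ne' hP.ne', div_eq_zero_iff,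
    or_iff_left (mul_pos hQ hP).ne']
  constructor <;> intro h
  · linear_combination (-‖ξ‖) * h
  · refine mul_left_cancel₀ hr.ne' ?_
    linear_combination -h

lemma gradPhi_eq_zero_iff {ξ η : E} (hξ : ξ ≠ 0) :
    gradPhi ξ η = 0 ↔ (∃ c : ℝ, 0 < c ∧ η = c • ξ) ∧ critNormMap ‖η‖ = ‖ξ‖ := by
  constructor
  · intro h
    obtain ⟨c, rfl⟩ := exists_eq_smul_of_gradPhi_eq_zero hξ h
    rw [gradPhi_smul_self_eq_zero_iff hξ] at h
    have hc : 0 < c := pos_of_mul_pos_left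
      (pos_of_critNormMap_pos (by rw [h]; exact norm_pos_iff.2 hξ)) (norm_nonneg ξ)
    rw [norm_smul, Real.norm_of_nonneg hc.le]
    exact ⟨⟨c, hc, rfl⟩, h⟩
  · rintro ⟨⟨c, hc, rfl⟩, h⟩
    rw [norm_smul, Real.norm_of_nonneg hc.le] at h
    exact (gradPhi_smul_self_eq_zero_iff hξ c).2 h

lemma existsUnique_gradPhi_eq_zero {ξ : E} (hξ : ξ ≠ 0) : ∃! η, gradPhi ξ η = 0 := by
  have hr : 0 < ‖ξ‖ := norm_pos_iff.2 hξ
  obtain ⟨s, -, hsr⟩ := exists_critNormMap_eq hr.le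
  have hs : 0 < s := pos_of_critNormMap_pos (hsr ▸ hr)
  have hnorm : ‖(s / ‖ξ‖) • ξ‖ = s := by
    rw [norm_smul, Real.norm_of_nonneg (by positivity), div_mul_cancel₀ _ hr.ne']
  refine ⟨(s / ‖ξ‖) • ξ,
    (gradPhi_eq_zero_iff hξ).2 ⟨⟨s / ‖ξ‖, by positivity, rfl⟩, by rw [hnorm]; exact hsr⟩,
    fun η hη => ?_⟩
  obtain ⟨⟨c, hc, rfl⟩, hcr⟩ := (gradPhi_eq_zero_iff hξ).1 hη
  rw [norm_smul, Real.norm_of_nonneg hc.le] at hcr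
  have hcs : c * ‖ξ‖ = s :=
    strictMonoOn_critNormMap.injOn (Set.mem_Ici.2 (by positivity)) (Set.mem_Ici.2 hs.le)
      (hcr.trans hsr.symm)
  rw [← hcs, mul_div_cancel_right₀ _ hr.ne']

lemma sqrt_le_one_add_sqrt_of_critNormMap_eq {r s : ℝ} (h : critNormMap s = r) :
    √(2 * (r - s) ^ 2 + 4) ≤ 1 + √(s ^ 2 + 1) := by
  have hrel : (s - r) ^ 2 * (s ^ 2 + 2) = 2 * s ^ 2 := by
    have h2 : √2 ^ 2 = 2 := Real.sq_sqrt zero_le_two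
    rw [← Real.sq_sqrt (by positivity : (0 : ℝ) ≤ s ^ 2 + 2), ← mul_pow, critNormMap_eq_iff.1 h,
      mul_pow, h2, mul_comm]
  have hP2 := Real.sq_sqrt (by positivity : (0 : ℝ) ≤ s ^ 2 + 1)
  have key := four_add_four_mul_sub_sq_le (sq_nonneg s)
  rw [Real.sqrt_le_left (by positivity)]
  nlinarith [sq_nonneg s]

lemma Phi_pos_of_gradPhi_eq_zero {ξ η : E} (hξ : ξ ≠ 0) (h : gradPhi ξ η = 0) :
    0 < Phi ξ η := by
  obtain ⟨⟨c, hc, rfl⟩, hcr⟩ := (gradPhi_eq_zero_iff hξ).1 h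
  have hsub : ‖ξ - c • ξ‖ = |‖ξ‖ - ‖c • ξ‖| :=
    (SameRay.sameRay_nonneg_smul_right ξ hc.le).norm_sub
  have hone : 1 < √(‖ξ‖ ^ 2 + 1) := by
    rw [Real.lt_sqrt zero_le_one]
    nlinarith [norm_pos_iff.2 hξ]
  have hmid := sqrt_le_one_add_sqrt_of_critNormMap_eq hcr
  rw [Phi, hsub, sq_abs]
  linarith

theorem unique_stationary_point :
    ∃ L₀ : ℝ, 1000 ≤ L₀ ∧ ∀ l : ℝ, L₀ ≤ l → ∀ ξ : EuclideanSpace ℝ (Fin 2),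
      (2 : ℝ) ^ (-3 * l - 1) ≤ ‖ξ‖ → ‖ξ‖ ≤ (2 : ℝ) ^ (-3 * l + 1) →
      (∃! η : EuclideanSpace ℝ (Fin 2), gradPhi ξ η = 0) ∧
      (∀ η : EuclideanSpace ℝ (Fin 2), gradPhi ξ η = 0 →
        (2 : ℝ) ^ (-l) ≤ ‖η‖ ∧ ‖η‖ ≤ (2 : ℝ) ^ (-l + 2) ∧
        (∃ c : ℝ, 0 < c ∧ η = c • ξ) ∧ Phi ξ η ≠ 0) := by
  refine ⟨1000, le_rfl, fun l hl ξ hlow hup => ?_⟩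
  have hlow' : (2 : ℝ) ^ (-3 * l - 1) = ((2 : ℝ) ^ (-l)) ^ 3 / 2 := by
    rw [show -3 * l - 1 = -l * (3 : ℕ) + -1 by push_cast; ring, Real.rpow_add two_pos,
      Real.rpow_mul zero_le_two, Real.rpow_natCast, Real.rpow_neg_one]
    ring
  have hup' : (2 : ℝ) ^ (-3 * l + 1) = 2 * ((2 : ℝ) ^ (-l)) ^ 3 := by
    rw [show -3 * l + 1 = -l * (3 : ℕ) + 1 by push_cast; ring, Real.rpow_add two_pos,
      Real.rpow_mul zero_le_two, Real.rpow_natCast, Real.rpow_one]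
    ring
  have hfour : (2 : ℝ) ^ (-l + 2) = 4 * (2 : ℝ) ^ (-l) := by
    rw [Real.rpow_add two_pos]; norm_num; ring
  have hsmall : (2 : ℝ) ^ (-l) ≤ 1 / 4 :=
    calc (2 : ℝ) ^ (-l) ≤ 2 ^ (-2 : ℝ) := Real.rpow_le_rpow_of_exponent_le one_le_two (by linarith)
      _ = 1 / 4 := by norm_num
  have hξ : ξ ≠ 0 := norm_pos_iff.1 ((Real.rpow_pos_of_pos two_pos _).trans_le hlow)
  refine ⟨existsUnique_gradPhi_eq_zero hξ, fun η hη => ?_⟩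
  obtain ⟨hsmul, hF⟩ := (gradPhi_eq_zero_iff hξ).1 hη
  rw [hlow', ← hF] at hlow
  rw [hup', ← hF] at hup
  obtain ⟨hle, hge⟩ := le_and_le_of_critNormMap_bounds (norm_nonneg η)
    (Real.rpow_pos_of_pos two_pos _) hsmall hlow hup
  exact ⟨hle, hfour ▸ hge, hsmul, (Phi_pos_of_gradPhi_eq_zero hξ hη).ne'⟩
end

section
/- For every real b > 0 one has 2b/√(2b²+4) > b/√(b²+1); moreover, for every b with 0 < b ≤ 0.3 one has the cubic lower bound 2b/√(2b²+4) − b/√(b²+1) ≥ b³/6. Equivalently, the odd function h(b) = b/√(b²+1) − 2b/√(2b²+4) satisfies h(b) < 0 for all b > 0 and −h(b) ≥ b³/6 for 0 < b ≤ 0.3. -/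
theorem radial_gradient_sign_and_cubic_bound :
    (∀ b : ℝ, 0 < b → b / Real.sqrt (b ^ 2 + 1) < 2 * b / Real.sqrt (2 * b ^ 2 + 4)) ∧
    (∀ b : ℝ, 0 < b → b ≤ 0.3 →
      b ^ 3 / 6 ≤ 2 * b / Real.sqrt (2 * b ^ 2 + 4) - b / Real.sqrt (b ^ 2 + 1)) := by
  constructor
  · intro b hb
    set s := Real.sqrt (b ^ 2 + 1) with hsdef
    set t := Real.sqrt (2 * b ^ 2 + 4) with htdef
    have hs0 : 0 < s := Real.sqrt_pos.mpr (by positivity)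
    have ht0 : 0 < t := Real.sqrt_pos.mpr (by positivity)
    have hs : s ^ 2 = b ^ 2 + 1 := Real.sq_sqrt (by positivity)
    have ht : t ^ 2 = 2 * b ^ 2 + 4 := Real.sq_sqrt (by positivity)
    rw [div_lt_div_iff₀ hs0 ht0]
    have h2 : t < 2 * s := by
      nlinarith [mul_pos hb hb, mul_pos hs0 ht0, sq_nonneg (t - 2 * s)]
    nlinarith [mul_pos hb hs0]
  · intro b hb hb3
    set s := Real.sqrt (b ^ 2 + 1) with hsdef
    set t := Real.sqrt (2 * b ^ 2 + 4) with htdef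
    have hs0 : 0 < s := Real.sqrt_pos.mpr (by positivity)
    have ht0 : 0 < t := Real.sqrt_pos.mpr (by positivity)
    have hs : s ^ 2 = b ^ 2 + 1 := Real.sq_sqrt (by positivity)
    have ht : t ^ 2 = 2 * b ^ 2 + 4 := Real.sq_sqrt (by positivity)
    have hsub : s ≤ 1.05 := by nlinarith [sq_nonneg (s - 1.05)]
    have htub : t ≤ 2.05 := by nlinarith [sq_nonneg (t - 2.05)]
    have hslb : 1 ≤ s := by nlinarith
    have htlb : 2 ≤ t := by nlinarith
    have hid : (2 * s - t) * (2 * s + t) = 2 * b ^ 2 := by nlinarith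
    have hts : t * s ≤ 2.1525 := by
      nlinarith [mul_le_mul htub hsub hs0.le (by norm_num : (0:ℝ) ≤ 2.05)]
    have hsum : 2 * s + t ≤ 4.15 := by linarith
    have hprod : t * s * (2 * s + t) ≤ 12 := by
      nlinarith [mul_le_mul hts hsum (by positivity) (by norm_num : (0:ℝ) ≤ 2.1525)]
    have hb3 : (0:ℝ) < b ^ 3 := by positivity
    have h12 : b ^ 3 * (t * s * (2 * s + t)) ≤ 12 * b ^ 3 := by
      nlinarith [mul_le_mul_of_nonneg_left hprod hb3.le]
    have hbid : b * ((2 * s - t) * (2 * s + t)) = 2 * b ^ 3 := by rw [hid]; ring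
    have key' : (b ^ 3 / 6 * (t * s)) * (2 * s + t) ≤ (2 * b * s - b * t) * (2 * s + t) := by
      nlinarith [h12, hbid]
    have key : b ^ 3 / 6 * (t * s) ≤ 2 * b * s - b * t :=
      le_of_mul_le_mul_right key' (by linarith)
    have h1 : 2 * b / t - b / s = (2 * b * s - b * t) / (t * s) := by
      field_simp
    rw [h1, le_div_iff₀ (by positivity)]
    linarith
end
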